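/- arXiv:1705.01328 — 6 statements merged into one kernel-verified Lean document; each statement's English description precedes it below -/
import Mathlib

section
/- Let K be a field, R = K[x_1,…,x_n], I an ideal of R, and B a finite set of monomials of R connected to 1 whose classes form a K-basis of the quotient R/I (equivalently R = span(B) ⊕ I as K-vector spaces). Suppose that for each border monomial m ∈ ∂B we are given a polynomial f_m = m + b_m belonging to I with b_m in the K-linear span of B. Then the ideal generated by the family {f_m : m ∈ ∂B} is equal to I; hence {f_m : m ∈ ∂B} is a border basis of I with respect to B. -/
open MvPolynomial

/-- The Hankel operator `H_σ : p ↦ (q ↦ σ(p·q))` associated to a linear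
functional `σ` on `K[x_1,…,x_n]`. -/
noncomputable def hankel {K : Type*} [Field K] {n : ℕ}
    (σ : MvPolynomial (Fin n) K →ₗ[K] K) :
    MvPolynomial (Fin n) K →ₗ[K] (MvPolynomial (Fin n) K →ₗ[K] K) :=
  (LinearMap.mul K (MvPolynomial (Fin n) K)).compr₂ σ

/-- The kernel `I_σ = {p | ∀ q, σ(p·q) = 0}` of the Hankel operator, as an ideal. -/
def hankelKer {K : Type*} [Field K] {n : ℕ}
    (σ : MvPolynomial (Fin n) K →ₗ[K] K) : Ideal (MvPolynomial (Fin n) K) where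
  carrier := {p | ∀ q, σ (p * q) = 0}
  add_mem' := by
    intro a b ha hb q
    rw [add_mul, map_add, ha, hb, add_zero]
  zero_mem' := by
    intro q
    rw [zero_mul, map_zero]
  smul_mem' := by
    intro c p hp q
    simp only [smul_eq_mul, Set.mem_setOf_eq] at *
    rw [mul_comm c p, mul_assoc]
    exact hp _

/-- A set of monomial exponents is connected to `1`. -/
def connectedToOne {n : ℕ} (S : Set (Fin n →₀ ℕ)) : Prop :=
  0 ∈ S ∧ ∀ α ∈ S, α ≠ 0 → ∃ β ∈ S, ∃ i : Fin n, α = β + Finsupp.single i 1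

/-- The border `∂B = B⁺ \ B` of a set of monomial exponents. -/
def border {n : ℕ} (B : Finset (Fin n →₀ ℕ)) : Set (Fin n →₀ ℕ) :=
  {α | α ∉ B ∧ ∃ β ∈ B, ∃ i : Fin n, α = β + Finsupp.single i 1}

/-! The `K`-space `span(B) + (F)` contains `1` and every border monomial `m = f_m - b_m`, so it is
stable under multiplication by each variable; hence it is all of `R`. As `(F) ⊆ I` and
`span(B) ∩ I = 0`, the modular law forces `(F) = I`. -/

namespace MvPolynomial

theorem submodule_eq_top_of_one_mem_of_X_mul_mem {R σ : Type*} [CommSemiring R]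
    (S : Submodule R (MvPolynomial σ R)) (h1 : 1 ∈ S) (hX : ∀ i, ∀ p ∈ S, X i * p ∈ S) :
    S = ⊤ := by
  have hmul : ∀ q, ∀ p ∈ S, q * p ∈ S := by
    intro q
    induction q using MvPolynomial.induction_on with
    | C a => intro p hp; simpa [C_mul'] using S.smul_mem a hp
    | add q r hq hr => intro p hp; rw [add_mul]; exact add_mem (hq p hp) (hr p hp)
    | mul_X q i hq => intro p hp; rw [mul_assoc]; exact hq _ (hX i p hp)
  exact eq_top_iff.mpr fun q _ => by simpa using hmul q 1 h1

end MvPolynomial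

theorem X_mul_mem_restrictSupport_sup_of_border_mem {K : Type*} [CommSemiring K] {n : ℕ}
    {B : Finset (Fin n →₀ ℕ)} {J : Ideal (MvPolynomial (Fin n) K)}
    (hborder : ∀ m ∈ border B, monomial m (1 : K) ∈ restrictSupport K B ⊔ J.restrictScalars K)
    (i : Fin n) {p : MvPolynomial (Fin n) K}
    (hp : p ∈ restrictSupport K B ⊔ J.restrictScalars K) :
    X i * p ∈ restrictSupport K B ⊔ J.restrictScalars K := by
  obtain ⟨v, hv, j, hj, rfl⟩ := Submodule.mem_sup.mp hp
  clear hp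
  rw [mul_add]
  refine add_mem ?_ (Submodule.mem_sup_right (J.mul_mem_left (X i) hj))
  rw [restrictSupport_eq_span] at hv
  induction hv using Submodule.span_induction with
  | mem _ hβ =>
    obtain ⟨β, hβ, rfl⟩ := hβ
    rw [mul_comm, ← pow_one (X i), ← monomial_add_single]
    by_cases hB : β + Finsupp.single i 1 ∈ B
    · exact Submodule.mem_sup_left ((monomial_mem_restrictSupport K).mpr (.inl hB))
    · exact hborder _ ⟨hB, β, hβ, i, rfl⟩
  | zero => simp
  | add x y _ _ hx hy => rw [mul_add]; exact add_mem hx hy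
  | smul c x _ hx => rw [mul_smul_comm]; exact Submodule.smul_mem _ c hx

/-- If the monomials of `B` form a basis of `R/I` (i.e. `R = span(B) ⊕ I`) and
for each border monomial `m ∈ ∂B` we have `f_m = m + b_m ∈ I` with
`b_m ∈ span(B)`, then the family `{f_m}` generates `I`; hence it is a border
basis of `I` with respect to `B`. -/
theorem border_rewriting_family_generates {K : Type*} [Field K] {n : ℕ}
    (I : Ideal (MvPolynomial (Fin n) K)) (B : Finset (Fin n →₀ ℕ))
    (hconn : connectedToOne (B : Set (Fin n →₀ ℕ)))
    (hcompl : IsCompl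
      (Submodule.span K ((fun β => monomial β (1 : K)) '' (B : Set (Fin n →₀ ℕ))))
      (Submodule.restrictScalars K I))
    (f : (Fin n →₀ ℕ) → MvPolynomial (Fin n) K)
    (hf : ∀ m ∈ border B, f m - monomial m (1 : K) ∈
      Submodule.span K ((fun β => monomial β (1 : K)) '' (B : Set (Fin n →₀ ℕ))))
    (hfI : ∀ m ∈ border B, f m ∈ I) :
    Ideal.span (f '' border B) = I := by
  rw [← restrictSupport_eq_span] at hf hcompl
  set V := restrictSupport K (B : Set (Fin n →₀ ℕ))
  set J := Ideal.span (f '' border B)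
  have hJI : J ≤ I := Ideal.span_le.mpr (by rintro _ ⟨m, hm, rfl⟩; exact hfI m hm)
  have hborder : ∀ m ∈ border B, monomial m (1 : K) ∈ V ⊔ J.restrictScalars K := fun m hm => by
    have hfJ : f m ∈ J := Ideal.subset_span ⟨m, hm, rfl⟩
    simpa using sub_mem (Submodule.mem_sup_right hfJ : f m ∈ V ⊔ J.restrictScalars K)
      (Submodule.mem_sup_left (hf m hm))
  have hone : (1 : MvPolynomial (Fin n) K) ∈ V ⊔ J.restrictScalars K :=
    Submodule.mem_sup_left <| by
      rw [← C_1, C_apply]; exact (monomial_mem_restrictSupport K).mpr (.inl hconn.1)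
  have htop : V ⊔ J.restrictScalars K = ⊤ :=
    submodule_eq_top_of_one_mem_of_X_mul_mem _ hone
      fun i _ hp => X_mul_mem_restrictSupport_sup_of_border_mem hborder i hp
  refine Submodule.restrictScalars_injective K _ _ (eq_of_le_of_inf_le_of_sup_le
    (z := V) (Submodule.restrictScalars_mono K hJI) ?_ ?_)
  · rw [inf_comm, hcompl.disjoint.eq_bot]; exact bot_le
  · exact le_top.trans_eq (by rw [sup_comm, htop])
end

section
/- Let K be a field, R = K[x_1,…,x_n], and σ : R → K a linear functional whose Hankel operator H_σ has finite rank r. Then: (1) H_σ induces an injective linear map from A_σ = R/I_σ onto the image of H_σ, so dim_K A_σ = r; (2) the image of H_σ equals the annihilator I_σ^⊥ = {τ ∈ Hom_K(R, K) : τ(p) = 0 for all p ∈ I_σ}, which is canonically isomorphic to the dual space Hom_K(A_σ, K); hence H_σ induces a K-linear isomorphism between A_σ and its dual Hom_K(A_σ, K). -/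
open MvPolynomial

/-!
The functional `σ` vanishes on `I_σ`, so it descends to `A_σ`, and the pairing
`(p̄, q̄) ↦ σ(p q)` on `A_σ` is nondegenerate, as `p̄` pairs to zero with everything exactly
when `p ∈ I_σ`. Hence `H_σ` factors as `A_σ ↪ A_σ* ↪ R*`, the second map being dual to the
projection `R ↠ A_σ`; it is injective with image the annihilator of `I_σ`. Finite rank makes
`A_σ` finite dimensional, so the injective pairing `A_σ → A_σ*` is an isomorphism, and the
image of `H_σ` is all of that annihilator.
-/

section QuotientLift

variable {K R M : Type*} [CommRing K] [CommRing R] [Algebra K R] [AddCommGroup M] [Module K M]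

noncomputable def Ideal.Quotient.liftLinearMap (I : Ideal R) (f : R →ₗ[K] M)
    (hf : ∀ p ∈ I, f p = 0) : (R ⧸ I) →ₗ[K] M :=
  (I.restrictScalars K).liftQ f (fun p hp => hf p hp) ∘ₗ
    (Submodule.Quotient.restrictScalarsEquiv K I).symm.toLinearMap

@[simp]
theorem Ideal.Quotient.liftLinearMap_mk (I : Ideal R) (f : R →ₗ[K] M)
    (hf : ∀ p ∈ I, f p = 0) (p : R) :
    Ideal.Quotient.liftLinearMap I f hf (Ideal.Quotient.mk I p) = f p :=
  rfl

end QuotientLift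

section Hankel

variable {K : Type*} [Field K] {n : ℕ} (σ : MvPolynomial (Fin n) K →ₗ[K] K)

noncomputable def hankelPairing :
    (MvPolynomial (Fin n) K ⧸ hankelKer σ) →ₗ[K]
      Module.Dual K (MvPolynomial (Fin n) K ⧸ hankelKer σ) :=
  (LinearMap.mul K _).compr₂
    (Ideal.Quotient.liftLinearMap (hankelKer σ) σ fun p hp => by simpa using hp 1)

theorem hankelPairing_mk (p q : MvPolynomial (Fin n) K) :
    hankelPairing σ (Ideal.Quotient.mk _ p) (Ideal.Quotient.mk _ q) = σ (p * q) :=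
  rfl

theorem hankelPairing_injective : Function.Injective (hankelPairing σ) := by
  rw [← LinearMap.ker_eq_bot, Submodule.eq_bot_iff]
  intro a ha
  obtain ⟨p, rfl⟩ := Ideal.Quotient.mk_surjective a
  refine Ideal.Quotient.eq_zero_iff_mem.2 fun q => ?_
  rw [← hankelPairing_mk, LinearMap.mem_ker.1 ha, LinearMap.zero_apply]

noncomputable def hankelBar :
    (MvPolynomial (Fin n) K ⧸ hankelKer σ) →ₗ[K] Module.Dual K (MvPolynomial (Fin n) K) :=
  (Ideal.Quotient.mkₐ K (hankelKer σ)).toLinearMap.dualMap ∘ₗ hankelPairing σ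

theorem hankelBar_mk (p : MvPolynomial (Fin n) K) :
    hankelBar σ (Ideal.Quotient.mk _ p) = hankel σ p :=
  rfl

theorem hankelBar_injective : Function.Injective (hankelBar σ) :=
  (LinearMap.dualMap_injective_of_surjective (Ideal.Quotient.mkₐ_surjective K _)).comp
    (hankelPairing_injective σ)

theorem range_hankelBar : LinearMap.range (hankelBar σ) = LinearMap.range (hankel σ) := by
  have hcomp : hankel σ = hankelBar σ ∘ₗ (Ideal.Quotient.mkₐ K (hankelKer σ)).toLinearMap := rfl
  rw [hcomp, LinearMap.range_comp_of_range_eq_top]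
  exact LinearMap.range_eq_top.2 (Ideal.Quotient.mkₐ_surjective K _)

noncomputable def hankelQuotEquivRange :
    (MvPolynomial (Fin n) K ⧸ hankelKer σ) ≃ₗ[K] LinearMap.range (hankel σ) :=
  (LinearEquiv.ofInjective (hankelBar σ) (hankelBar_injective σ)).trans
    (LinearEquiv.ofEq _ _ (range_hankelBar σ))

theorem hankelPairing_bijective
    [FiniteDimensional K (MvPolynomial (Fin n) K ⧸ hankelKer σ)] :
    Function.Bijective (hankelPairing σ) :=
  ⟨hankelPairing_injective σ, (LinearMap.injective_iff_surjective_of_finrank_eq_finrank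
    Subspace.dual_finrank_eq.symm).1 (hankelPairing_injective σ)⟩

noncomputable def hankelDualEquiv [FiniteDimensional K (MvPolynomial (Fin n) K ⧸ hankelKer σ)] :
    (MvPolynomial (Fin n) K ⧸ hankelKer σ) ≃ₗ[K]
      Module.Dual K (MvPolynomial (Fin n) K ⧸ hankelKer σ) :=
  LinearEquiv.ofBijective (hankelPairing σ) (hankelPairing_bijective σ)

theorem hankelDualEquiv_mk [FiniteDimensional K (MvPolynomial (Fin n) K ⧸ hankelKer σ)]
    (p q : MvPolynomial (Fin n) K) :
    hankelDualEquiv σ (Ideal.Quotient.mk _ p) (Ideal.Quotient.mk _ q) = σ (p * q) :=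
  rfl

theorem mem_range_hankel_iff [FiniteDimensional K (MvPolynomial (Fin n) K ⧸ hankelKer σ)]
    (τ : Module.Dual K (MvPolynomial (Fin n) K)) :
    τ ∈ LinearMap.range (hankel σ) ↔ ∀ p ∈ hankelKer σ, τ p = 0 := by
  have hrange : LinearMap.range (hankel σ) =
      LinearMap.range (Ideal.Quotient.mkₐ K (hankelKer σ)).toLinearMap.dualMap := by
    rw [← range_hankelBar, hankelBar, LinearMap.range_comp,
      LinearMap.range_eq_top.2 (hankelPairing_bijective σ).2, Submodule.map_top]
  rw [hrange, LinearMap.range_dualMap_eq_dualAnnihilator_ker, Submodule.mem_dualAnnihilator]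
  simp only [LinearMap.mem_ker, AlgHom.toLinearMap_apply, Ideal.Quotient.mkₐ_eq_mk,
    Ideal.Quotient.eq_zero_iff_mem]

end Hankel

/-- If `H_σ` has finite rank `r`, then (1) `H_σ` induces an injective linear map
from `A_σ = R/I_σ` onto the image of `H_σ`, so `dim A_σ = r`; (2) the image of
`H_σ` is the annihilator of `I_σ`; hence `H_σ` induces an isomorphism between
`A_σ` and its dual. -/
theorem hankel_finite_rank_gorenstein {K : Type*} [Field K] {n : ℕ} (r : ℕ)
    (σ : MvPolynomial (Fin n) K →ₗ[K] K)
    (hrank : Module.rank K ↥(LinearMap.range (hankel σ)) = r) :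
    (∃ Hbar : (MvPolynomial (Fin n) K ⧸ hankelKer σ) →ₗ[K]
        Module.Dual K (MvPolynomial (Fin n) K),
      Function.Injective Hbar ∧
      (∀ p : MvPolynomial (Fin n) K,
        Hbar (Ideal.Quotient.mk (hankelKer σ) p) = hankel σ p) ∧
      LinearMap.range Hbar = LinearMap.range (hankel σ)) ∧
    Module.finrank K (MvPolynomial (Fin n) K ⧸ hankelKer σ) = r ∧
    ((LinearMap.range (hankel σ) : Set (Module.Dual K (MvPolynomial (Fin n) K))) =
      {τ : Module.Dual K (MvPolynomial (Fin n) K) | ∀ p ∈ hankelKer σ, τ p = 0}) ∧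
    ∃ e : (MvPolynomial (Fin n) K ⧸ hankelKer σ) ≃ₗ[K]
        Module.Dual K (MvPolynomial (Fin n) K ⧸ hankelKer σ),
      ∀ p q : MvPolynomial (Fin n) K,
        e (Ideal.Quotient.mk (hankelKer σ) p) (Ideal.Quotient.mk (hankelKer σ) q) = σ (p * q) := by
  have hrankA : Module.rank K (MvPolynomial (Fin n) K ⧸ hankelKer σ) = r :=
    (hankelQuotEquivRange σ).rank_eq.trans hrank
  have : FiniteDimensional K (MvPolynomial (Fin n) K ⧸ hankelKer σ) :=
    Module.finite_of_rank_eq_nat hrankA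
  exact ⟨⟨hankelBar σ, hankelBar_injective σ, hankelBar_mk σ, range_hankelBar σ⟩,
    Module.finrank_eq_of_rank_eq hrankA, Set.ext (mem_range_hankel_iff σ),
    hankelDualEquiv σ, hankelDualEquiv_mk σ⟩
end

section
/- Let K be a field, R = K[x_1,…,x_n], and I an ideal of R such that A = R/I is finite dimensional over K. Then the following are equivalent: (i) A is Gorenstein, i.e., there exists a linear functional σ : A → K such that the K-linear map A → Hom_K(A, K) sending a to the functional b ↦ σ(ab) is bijective; (ii) there exists a linear functional σ : R → K such that I equals the kernel I_σ of the Hankel operator H_σ. -/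
/-!
Write `π : R → A = R/I` and `τ : A → K`. Since `π` is surjective, `p` lies in `I_{τ ∘ π}` exactly
when `π p` lies in the kernel of `a ↦ τ(a · -)`, so `I = I_{τ ∘ π}` precisely when this map
`A → Hom_K(A, K)` is injective, which in finite dimension means bijective. Conversely, a functional
`σ` with `I = I_σ` vanishes on `I` (take `q = 1`), hence is of the form `τ ∘ π`.
-/

open MvPolynomial

theorem injective_comp_mulLeft_iff {K A : Type*} [CommRing K] [Ring A] [Algebra K A]
    (τ : A →ₗ[K] K) :
    Function.Injective (fun a : A => τ ∘ₗ LinearMap.mulLeft K a) ↔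
      ∀ a : A, (∀ b, τ (a * b) = 0) → a = 0 := by
  change Function.Injective ((LinearMap.mul K A).compr₂ τ) ↔ _
  rw [injective_iff_map_eq_zero]
  refine forall_congr' fun a => imp_congr_left ?_
  exact LinearMap.ext_iff

theorem bijective_comp_mulLeft_of_injective {K A : Type*} [Field K] [Ring A] [Algebra K A]
    [FiniteDimensional K A] {τ : A →ₗ[K] K}
    (hτ : Function.Injective (fun a : A => τ ∘ₗ LinearMap.mulLeft K a)) :
    Function.Bijective (fun a : A => τ ∘ₗ LinearMap.mulLeft K a) := by
  change Function.Injective ((LinearMap.mul K A).compr₂ τ) at hτ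
  exact ⟨hτ, (LinearMap.injective_iff_surjective_of_finrank_eq_finrank
    Subspace.dual_finrank_eq.symm).1 hτ⟩

theorem Ideal.Quotient.exists_comp_mkₐ_eq {K R M : Type*} [CommRing K] [CommRing R] [Algebra K R]
    [AddCommGroup M] [Module K M] {I : Ideal R} (σ : R →ₗ[K] M) (h : ∀ p ∈ I, σ p = 0) :
    ∃ τ : R ⧸ I →ₗ[K] M, τ ∘ₗ (Ideal.Quotient.mkₐ K I).toLinearMap = σ :=
  ⟨(I.restrictScalars K).liftQ σ h ∘ₗ
    (Submodule.Quotient.restrictScalarsEquiv K (I : Submodule R R)).symm.toLinearMap, rfl⟩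

section Hankel

variable {K : Type*} [Field K] {n : ℕ}

theorem apply_mem_hankelKer {σ : MvPolynomial (Fin n) K →ₗ[K] K} {p : MvPolynomial (Fin n) K}
    (hp : p ∈ hankelKer σ) : σ p = 0 := by
  simpa using hp 1

theorem mem_hankelKer_comp_mkₐ_iff {I : Ideal (MvPolynomial (Fin n) K)}
    (τ : MvPolynomial (Fin n) K ⧸ I →ₗ[K] K) (p : MvPolynomial (Fin n) K) :
    p ∈ hankelKer (τ ∘ₗ (Ideal.Quotient.mkₐ K I).toLinearMap) ↔
      ∀ b, τ (Ideal.Quotient.mk I p * b) = 0 := by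
  rw [Ideal.Quotient.mk_surjective.forall]
  exact forall_congr' fun q => by rw [← map_mul]; rfl

theorem hankelKer_comp_mkₐ_eq_iff {I : Ideal (MvPolynomial (Fin n) K)}
    (τ : MvPolynomial (Fin n) K ⧸ I →ₗ[K] K) :
    hankelKer (τ ∘ₗ (Ideal.Quotient.mkₐ K I).toLinearMap) = I ↔
      Function.Injective (fun a => τ ∘ₗ LinearMap.mulLeft K a) := by
  rw [injective_comp_mulLeft_iff, Ideal.Quotient.mk_surjective.forall, SetLike.ext_iff]
  refine forall_congr' fun p => ?_
  rw [mem_hankelKer_comp_mkₐ_iff, ← Ideal.Quotient.eq_zero_iff_mem]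
  exact ⟨fun h => h.1, fun h => ⟨h, fun hp b => by rw [hp, zero_mul, map_zero]⟩⟩

end Hankel

/-- A finite-dimensional quotient `A = R/I` is Gorenstein (some `σ : A → K`
makes `a ↦ (b ↦ σ(ab))` bijective) iff `I` is the kernel of a Hankel operator. -/
theorem gorenstein_iff_hankel_kernel {K : Type*} [Field K] {n : ℕ}
    (I : Ideal (MvPolynomial (Fin n) K))
    [FiniteDimensional K (MvPolynomial (Fin n) K ⧸ I)] :
    (∃ σ : (MvPolynomial (Fin n) K ⧸ I) →ₗ[K] K,
      Function.Bijective fun a : MvPolynomial (Fin n) K ⧸ I =>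
        σ ∘ₗ LinearMap.mulLeft K a) ↔
    (∃ σ : MvPolynomial (Fin n) K →ₗ[K] K, I = hankelKer σ) := by
  constructor
  · rintro ⟨τ, hτ⟩
    exact ⟨τ ∘ₗ (Ideal.Quotient.mkₐ K I).toLinearMap,
      ((hankelKer_comp_mkₐ_eq_iff τ).2 hτ.injective).symm⟩
  · rintro ⟨σ, hI⟩
    obtain ⟨τ, hτ⟩ := Ideal.Quotient.exists_comp_mkₐ_eq (I := I) σ
      fun p hp => apply_mem_hankelKer (hI ▸ hp)
    refine ⟨τ, bijective_comp_mulLeft_of_injective ?_⟩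
    rw [← hankelKer_comp_mkₐ_eq_iff, hτ, hI]
end

section
/- Let K be a field, ξ_1,…,ξ_r pairwise distinct points of K^n, and ω_1,…,ω_r nonzero elements of K. Define the linear functional σ : R = K[x_1,…,x_n] → K by σ(p) = Σ_{i=1}^r ω_i p(ξ_i). Then the kernel I_σ of the Hankel operator H_σ equals the vanishing ideal {p ∈ R : p(ξ_1) = … = p(ξ_r) = 0} of the set {ξ_1,…,ξ_r}, and rank H_σ = dim_K A_σ = r. -/
/-! Distinct points of `K^n` are separated by affine linear polynomials, and products of these
give Lagrange interpolants, so evaluation at `ξ_1, …, ξ_r` maps `K[x_1, …, x_n]` onto `K^r`.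
Testing `p ∈ I_σ` against the interpolant of `ξ_i` yields `ω_i p(ξ_i) = 0`, so `I_σ` is the kernel
of this evaluation map and `A_σ ≅ K^r`; and `H_σ` has kernel `I_σ`, so its range is `≅ A_σ`. -/

open MvPolynomial

namespace MvPolynomial

variable {K τ ι : Type*} [Field K]

theorem exists_eval_eq_one_eval_eq_zero {x y : τ → K} (hxy : x ≠ y) :
    ∃ p : MvPolynomial τ K, eval x p = 1 ∧ eval y p = 0 := by
  obtain ⟨k, hk⟩ := Function.ne_iff.mp hxy
  refine ⟨C (x k - y k)⁻¹ * (X k - C (y k)), ?_, ?_⟩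
  · simp [inv_mul_cancel₀ (sub_ne_zero.mpr hk)]
  · simp

noncomputable def multiEval (ξ : ι → τ → K) : MvPolynomial τ K →ₐ[K] ι → K :=
  AlgHom.pi fun i => aeval (ξ i)

@[simp]
theorem multiEval_apply (ξ : ι → τ → K) (p : MvPolynomial τ K) (i : ι) :
    multiEval ξ p i = eval (ξ i) p :=
  rfl

theorem exists_multiEval_eq_single [Finite ι] [DecidableEq ι] {ξ : ι → τ → K}
    (hξ : Function.Injective ξ) (i : ι) :
    ∃ p, multiEval ξ p = Pi.single (M := fun _ => K) i 1 := by
  have hsep (j : ι) : ∃ p : MvPolynomial τ K, eval (ξ i) p = 1 ∧ (j ≠ i → eval (ξ j) p = 0) := by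
    by_cases hj : j = i
    · exact ⟨1, by simp, fun h => (h hj).elim⟩
    · obtain ⟨p, hp_one, hp_zero⟩ := exists_eval_eq_one_eval_eq_zero (hξ.ne (Ne.symm hj))
      exact ⟨p, hp_one, fun _ => hp_zero⟩
  choose q hq_one hq_zero using hsep
  have := Fintype.ofFinite ι
  refine ⟨∏ j, q j, ?_⟩
  funext j
  rw [multiEval_apply, map_prod]
  by_cases hj : j = i
  · subst hj
    simp [hq_one]
  · rw [Pi.single_eq_of_ne hj]
    exact Finset.prod_eq_zero (Finset.mem_univ j) (hq_zero j hj)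

theorem multiEval_surjective [Finite ι] {ξ : ι → τ → K} (hξ : Function.Injective ξ) :
    Function.Surjective (multiEval ξ) := by
  classical
  have := Fintype.ofFinite ι
  choose q hq using exists_multiEval_eq_single hξ
  intro v
  refine ⟨∑ i, v i • q i, ?_⟩
  simp only [map_sum, map_smul, hq]
  exact (pi_eq_sum_univ' v).symm

end MvPolynomial

section Hankel

variable {K : Type*} [Field K] {n : ℕ}

theorem ker_hankel (σ : MvPolynomial (Fin n) K →ₗ[K] K) :
    LinearMap.ker (hankel σ) = (hankelKer σ).restrictScalars K := by
  ext p
  simp only [LinearMap.mem_ker, Submodule.restrictScalars_mem]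
  exact LinearMap.ext_iff

theorem rank_range_hankel (σ : MvPolynomial (Fin n) K →ₗ[K] K) :
    Module.rank K (LinearMap.range (hankel σ)) =
      Module.rank K (MvPolynomial (Fin n) K ⧸ hankelKer σ) :=
  ((LinearMap.quotKerEquivRange (hankel σ)).symm.trans
    ((Submodule.quotEquivOfEq _ _ (ker_hankel σ)).trans
      (Submodule.Quotient.restrictScalarsEquiv K (hankelKer σ)))).rank_eq

theorem mem_hankelKer_iff_of_eq_sum_eval {ι : Type*} [Fintype ι] {ξ : ι → Fin n → K}
    (hξ : Function.Injective ξ) {ω : ι → K} (hω : ∀ i, ω i ≠ 0)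
    {σ : MvPolynomial (Fin n) K →ₗ[K] K}
    (hσ : ∀ p, σ p = ∑ i, ω i * eval (ξ i) p) (p : MvPolynomial (Fin n) K) :
    p ∈ hankelKer σ ↔ ∀ i, eval (ξ i) p = 0 := by
  classical
  refine ⟨fun hp i => ?_, fun hp q => by simp [hσ, hp]⟩
  obtain ⟨q, hq⟩ := exists_multiEval_eq_single hξ i
  have hσ_pq : σ (p * q) = ω i * eval (ξ i) p := by
    have hq_eval (j : ι) : eval (ξ j) q = if j = i then 1 else 0 := by
      rw [← multiEval_apply, hq, Pi.single_apply]
    simp [hσ, hq_eval]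
  simpa [hσ_pq, hω i] using hp q

end Hankel

/-- For `σ(p) = Σ_i ω_i p(ξ_i)` with pairwise distinct points `ξ_i` and nonzero
weights `ω_i`, the kernel `I_σ` of the Hankel operator is the vanishing ideal of
`{ξ_1,…,ξ_r}` and `rank H_σ = dim A_σ = r`. -/
theorem hankel_of_weighted_evaluations {K : Type*} [Field K] {n r : ℕ}
    (ξ : Fin r → Fin n → K) (hξ : Function.Injective ξ)
    (ω : Fin r → K) (hω : ∀ i, ω i ≠ 0)
    (σ : MvPolynomial (Fin n) K →ₗ[K] K)
    (hσ : ∀ p : MvPolynomial (Fin n) K, σ p = ∑ i : Fin r, ω i * eval (ξ i) p) :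
    (∀ p : MvPolynomial (Fin n) K,
      p ∈ hankelKer σ ↔ ∀ i : Fin r, eval (ξ i) p = 0) ∧
    Module.rank K ↥(LinearMap.range (hankel σ)) = r ∧
    Module.finrank K (MvPolynomial (Fin n) K ⧸ hankelKer σ) = r := by
  have hmem := mem_hankelKer_iff_of_eq_sum_eval hξ hω hσ
  have hker : hankelKer σ = RingHom.ker (multiEval ξ) := by
    ext p
    rw [hmem, RingHom.mem_ker, funext_iff]
    rfl
  let e : (MvPolynomial (Fin n) K ⧸ hankelKer σ) ≃ₐ[K] (Fin r → K) :=
    (Ideal.quotientEquivAlgOfEq K hker).trans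
      (Ideal.quotientKerAlgEquivOfSurjective (multiEval_surjective hξ))
  refine ⟨hmem, ?_, ?_⟩
  · rw [rank_range_hankel, e.toLinearEquiv.rank_eq, rank_fin_fun]
  · rw [e.toLinearEquiv.finrank_eq, Module.finrank_fin_fun]
end

section
/- Let K be a field, ξ_1,…,ξ_r pairwise distinct points of K^n, ω_1,…,ω_r nonzero elements of K, and σ : R = K[x_1,…,x_n] → K the linear functional σ(p) = Σ_{i=1}^r ω_i p(ξ_i). Suppose u_1,…,u_r ∈ R are interpolation polynomials: u_i(ξ_j) = 1 if i = j and 0 otherwise. Then: (1) the classes of u_1,…,u_r form a K-basis of A_σ = R/I_σ; (2) each class is idempotent: u_i² ≡ u_i (mod I_σ); (3) for every f ∈ R one has f·u_i ≡ f(ξ_i)·u_i (mod I_σ), so the class of u_i is a common eigenvector of all multiplication operators on A_σ, with the multiplication by x_k having eigenvalue the k-th coordinate of ξ_i; (4) σ(u_i) = ω_i for all i. -/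
/-!
Because the weights `ω i` are nonzero and `σ (p * u i) = ω i * p(ξ i)`, the kernel `I_σ` is exactly
the ideal of polynomials vanishing at every `ξ i`. Hence every claim reduces to comparing values
at the points `ξ j`, where the `u i` act as the standard basis vectors of `K^r`.
-/

open MvPolynomial

theorem Ideal.Quotient.mk_sum_smul {R A ι : Type*} [CommRing R] [CommRing A] [Algebra R A]
    (I : Ideal A) (s : Finset ι) (c : ι → R) (a : ι → A) :
    Ideal.Quotient.mk I (∑ i ∈ s, c i • a i) = ∑ i ∈ s, c i • Ideal.Quotient.mk I (a i) := by
  simp only [← Ideal.Quotient.mkₐ_eq_mk R, map_sum, map_smul]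

namespace MvPolynomial

variable {K : Type*} [Field K] {n r : ℕ}

theorem eval_sum_smul_of_interpolation {ξ : Fin r → Fin n → K} {u : Fin r → MvPolynomial (Fin n) K}
    (hu : ∀ i j, eval (ξ j) (u i) = if i = j then 1 else 0) (c : Fin r → K) (j : Fin r) :
    eval (ξ j) (∑ i, c i • u i) = c j := by
  simp [smul_eval, hu]

theorem mem_hankelKer_of_forall_eval_eq_zero {ξ : Fin r → Fin n → K} {ω : Fin r → K}
    {σ : MvPolynomial (Fin n) K →ₗ[K] K} (hσ : ∀ p, σ p = ∑ i, ω i * eval (ξ i) p)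
    {p : MvPolynomial (Fin n) K} (hp : ∀ i, eval (ξ i) p = 0) : p ∈ hankelKer σ := by
  intro q
  simp [hσ, hp]

theorem eval_eq_zero_of_mem_hankelKer {ξ : Fin r → Fin n → K} {ω : Fin r → K}
    {σ : MvPolynomial (Fin n) K →ₗ[K] K} (hσ : ∀ p, σ p = ∑ i, ω i * eval (ξ i) p)
    {u : Fin r → MvPolynomial (Fin n) K} (hu : ∀ i j, eval (ξ j) (u i) = if i = j then 1 else 0)
    {p : MvPolynomial (Fin n) K} (hp : p ∈ hankelKer σ) {i : Fin r} (hωi : ω i ≠ 0) :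
    eval (ξ i) p = 0 := by
  have h : σ (p * u i) = ω i * eval (ξ i) p := by
    simp [hσ, hu, eq_comm (a := i)]
  exact (mul_eq_zero.mp (h ▸ hp (u i))).resolve_left hωi

theorem mul_sub_eval_smul_mem_hankelKer {ξ : Fin r → Fin n → K} {ω : Fin r → K}
    {σ : MvPolynomial (Fin n) K →ₗ[K] K} (hσ : ∀ p, σ p = ∑ i, ω i * eval (ξ i) p)
    {u : Fin r → MvPolynomial (Fin n) K} (hu : ∀ i j, eval (ξ j) (u i) = if i = j then 1 else 0)
    (f : MvPolynomial (Fin n) K) (i : Fin r) : f * u i - eval (ξ i) f • u i ∈ hankelKer σ := by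
  refine mem_hankelKer_of_forall_eval_eq_zero hσ fun j => ?_
  rcases eq_or_ne i j with rfl | hij
  · simp [smul_eval, hu]
  · simp [smul_eval, hu, hij]

theorem mk_hankelKer_eq_sum_eval_smul {ξ : Fin r → Fin n → K} {ω : Fin r → K}
    {σ : MvPolynomial (Fin n) K →ₗ[K] K} (hσ : ∀ p, σ p = ∑ i, ω i * eval (ξ i) p)
    {u : Fin r → MvPolynomial (Fin n) K} (hu : ∀ i j, eval (ξ j) (u i) = if i = j then 1 else 0)
    (p : MvPolynomial (Fin n) K) :
    Ideal.Quotient.mk (hankelKer σ) p = ∑ i, eval (ξ i) p • Ideal.Quotient.mk (hankelKer σ) (u i) := by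
  have hp : p - ∑ i, eval (ξ i) p • u i ∈ hankelKer σ :=
    mem_hankelKer_of_forall_eval_eq_zero hσ fun j => by
      rw [map_sub, eval_sum_smul_of_interpolation hu, sub_self]
  rwa [← Ideal.Quotient.mk_eq_mk_iff_sub_mem, Ideal.Quotient.mk_sum_smul] at hp

theorem linearIndependent_mk_hankelKer {ξ : Fin r → Fin n → K} {ω : Fin r → K}
    (hω : ∀ i, ω i ≠ 0) {σ : MvPolynomial (Fin n) K →ₗ[K] K}
    (hσ : ∀ p, σ p = ∑ i, ω i * eval (ξ i) p)
    {u : Fin r → MvPolynomial (Fin n) K} (hu : ∀ i j, eval (ξ j) (u i) = if i = j then 1 else 0) :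
    LinearIndependent K fun i => Ideal.Quotient.mk (hankelKer σ) (u i) := by
  rw [Fintype.linearIndependent_iff]
  intro c hc j
  have hmem : ∑ i, c i • u i ∈ hankelKer σ := by
    rw [← Ideal.Quotient.eq_zero_iff_mem, Ideal.Quotient.mk_sum_smul, hc]
  rw [← eval_sum_smul_of_interpolation hu c j]
  exact eval_eq_zero_of_mem_hankelKer hσ hu hmem (hω j)

theorem span_mk_hankelKer_eq_top {ξ : Fin r → Fin n → K} {ω : Fin r → K}
    {σ : MvPolynomial (Fin n) K →ₗ[K] K} (hσ : ∀ p, σ p = ∑ i, ω i * eval (ξ i) p)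
    {u : Fin r → MvPolynomial (Fin n) K} (hu : ∀ i j, eval (ξ j) (u i) = if i = j then 1 else 0) :
    Submodule.span K (Set.range fun i => Ideal.Quotient.mk (hankelKer σ) (u i)) = ⊤ := by
  refine eq_top_iff.mpr fun x _ => ?_
  obtain ⟨p, rfl⟩ := Ideal.Quotient.mk_surjective x
  rw [mk_hankelKer_eq_sum_eval_smul hσ hu p]
  exact Submodule.sum_mem _ fun i _ => Submodule.smul_mem _ _ (Submodule.subset_span ⟨i, rfl⟩)

end MvPolynomial

theorem interpolation_idempotents_general {K : Type*} [Field K] {n r : ℕ}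
    (ξ : Fin r → Fin n → K)
    (ω : Fin r → K) (hω : ∀ i, ω i ≠ 0)
    (σ : MvPolynomial (Fin n) K →ₗ[K] K)
    (hσ : ∀ p : MvPolynomial (Fin n) K, σ p = ∑ i : Fin r, ω i * eval (ξ i) p)
    (u : Fin r → MvPolynomial (Fin n) K)
    (hu : ∀ i j : Fin r, eval (ξ j) (u i) = if i = j then 1 else 0) :
    ((LinearIndependent K fun i : Fin r => Ideal.Quotient.mk (hankelKer σ) (u i)) ∧
      Submodule.span K (Set.range fun i : Fin r => Ideal.Quotient.mk (hankelKer σ) (u i)) = ⊤) ∧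
    (∀ i : Fin r, u i * u i - u i ∈ hankelKer σ) ∧
    (∀ f : MvPolynomial (Fin n) K, ∀ i : Fin r,
      f * u i - eval (ξ i) f • u i ∈ hankelKer σ) ∧
    (∀ k : Fin n, ∀ i : Fin r, X k * u i - ξ i k • u i ∈ hankelKer σ) ∧
    (∀ i : Fin r, σ (u i) = ω i) := by
  have eigen := mul_sub_eval_smul_mem_hankelKer hσ hu
  refine ⟨⟨linearIndependent_mk_hankelKer hω hσ hu, span_mk_hankelKer_eq_top hσ hu⟩,
    fun i => ?_, eigen, fun k i => ?_, fun i => ?_⟩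
  · simpa [hu] using eigen (u i) i
  · simpa using eigen (X k) i
  · simp [hσ, hu]

/-- For `σ(p) = Σ_i ω_i p(ξ_i)` and interpolation polynomials `u_i` at the
points `ξ_i`: the classes of the `u_i` form a basis of `A_σ`, are idempotent,
satisfy `f·u_i ≡ f(ξ_i)·u_i (mod I_σ)` (so they are common eigenvectors of the
multiplication operators, with `x_k` having eigenvalue `ξ_{i,k}`), and
`σ(u_i) = ω_i`. -/
theorem interpolation_idempotents {K : Type*} [Field K] {n r : ℕ}
    (ξ : Fin r → Fin n → K) (hξ : Function.Injective ξ)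
    (ω : Fin r → K) (hω : ∀ i, ω i ≠ 0)
    (σ : MvPolynomial (Fin n) K →ₗ[K] K)
    (hσ : ∀ p : MvPolynomial (Fin n) K, σ p = ∑ i : Fin r, ω i * eval (ξ i) p)
    (u : Fin r → MvPolynomial (Fin n) K)
    (hu : ∀ i j : Fin r, eval (ξ j) (u i) = if i = j then 1 else 0) :
    ((LinearIndependent K fun i : Fin r => Ideal.Quotient.mk (hankelKer σ) (u i)) ∧
      Submodule.span K (Set.range fun i : Fin r => Ideal.Quotient.mk (hankelKer σ) (u i)) = ⊤) ∧
    (∀ i : Fin r, u i * u i - u i ∈ hankelKer σ) ∧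
    (∀ f : MvPolynomial (Fin n) K, ∀ i : Fin r,
      f * u i - eval (ξ i) f • u i ∈ hankelKer σ) ∧
    (∀ k : Fin n, ∀ i : Fin r, X k * u i - ξ i k • u i ∈ hankelKer σ) ∧
    (∀ i : Fin r, σ (u i) = ω i) :=
  interpolation_idempotents_general ξ ω hω σ hσ u hu
end

section
/- Let K be a field, R = K[x_1,…,x_n], ≺ a monomial order on ℕ^n, B a finite set of monomials connected to 1, and F = {f_m : m ∈ ∂B} a border basis with respect to B (so f_m = m + b_m with b_m ∈ span(B) and R = span(B) ⊕ (F)). Assume that for each m ∈ ∂B, the monomial m is the ≺-largest monomial occurring in f_m. Then F is a Gröbner basis of the ideal I = (F) for the order ≺: for every nonzero g ∈ I, there exists m ∈ ∂B such that the exponent of m divides (is componentwise less than or equal to) the ≺-leading exponent of g. -/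
open MvPolynomial

/-! Build the monomial order `≺` from `lt` and divide `g` by the border basis
(`MonomialOrder.div_set`): `g = ∑ q_m f_m + r` with `deg (q_m f_m) ≼ deg g` and no exponent of `r`
divisible by a border exponent. Since `0 ∈ B`, every exponent outside `B` is divisible by a
border exponent, so `r ∈ span B ∩ (F) = 0`. The leading exponent of `g` then occurs as the degree
`m + deg q_m` of some summand, hence is divisible by `m`. -/

structure IsStrictMonomialOrder {σ : Type*} (lt : (σ →₀ ℕ) → (σ →₀ ℕ) → Prop) : Prop where
  irrefl : ∀ a, ¬ lt a a
  trans : ∀ a b c, lt a b → lt b c → lt a c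
  total : ∀ a b, a ≠ b → lt a b ∨ lt b a
  add_right : ∀ a b c, lt a b → lt (a + c) (b + c)
  zero_lt : ∀ a, a ≠ 0 → lt 0 a

/-- A copy of `σ →₀ ℕ` on which `MonomialOrder.ofLt` puts its linear order, kept apart from the
pointwise order of `σ →₀ ℕ`. -/
def MonomialSyn (σ : Type*) : Type _ := σ →₀ ℕ

noncomputable instance (σ : Type*) : AddCommMonoid (MonomialSyn σ) :=
  inferInstanceAs (AddCommMonoid (σ →₀ ℕ))

namespace IsStrictMonomialOrder

variable {σ : Type*} {lt : (σ →₀ ℕ) → (σ →₀ ℕ) → Prop}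

theorem isStrictTotalOrder (h : IsStrictMonomialOrder lt) : IsStrictTotalOrder (σ →₀ ℕ) lt where
  irrefl := h.irrefl
  trans := h.trans
  trichotomous a b hab hba := by
    by_contra hne
    exact (h.total a b hne).elim hab hba

theorem lt_of_le_of_ne (h : IsStrictMonomialOrder lt) {a b : σ →₀ ℕ} (hle : a ≤ b) (hne : a ≠ b) :
    lt a b := by
  have hpos : b - a ≠ 0 := fun h0 => hne (le_antisymm hle (tsub_eq_zero_iff_le.1 h0))
  simpa [tsub_add_cancel_of_le hle] using h.add_right 0 (b - a) a (h.zero_lt _ hpos)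

noncomputable abbrev linearOrder (h : IsStrictMonomialOrder lt) : LinearOrder (MonomialSyn σ) :=
  haveI := h.isStrictTotalOrder
  by classical exact linearOrderOfSTO (α := σ →₀ ℕ) lt

end IsStrictMonomialOrder

namespace MonomialOrder

variable {σ : Type*}

/-- Well-foundedness comes from Dickson's lemma, since `lt` extends the pointwise order. -/
noncomputable def ofLt [Finite σ] {lt : (σ →₀ ℕ) → (σ →₀ ℕ) → Prop}
    (h : IsStrictMonomialOrder lt) : MonomialOrder σ :=
  letI := h.linearOrder
  haveI : IsOrderedAddMonoid (MonomialSyn σ) :=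
    { add_le_add_left := fun a b hab c => Or.imp (congrArg (· + c)) (h.add_right a b c) hab }
  have hmono : @Monotone (σ →₀ ℕ) (MonomialSyn σ) _ _ id := fun a b hab =>
    (eq_or_ne a b).imp id (h.lt_of_le_of_ne hab)
  haveI : WellQuasiOrderedLE (MonomialSyn σ) :=
    hmono.wellQuasiOrderedLE_of_wellQuasiOrderedLE_of_surjective Function.surjective_id
  { syn := MonomialSyn σ
    toSyn := AddEquiv.refl _
    toSyn_monotone := hmono }

section CommSemiring

variable {R : Type*} [CommSemiring R]

theorem degree_eq_of_forall_lt (m : MonomialOrder σ) {f : MvPolynomial σ R} {d : σ →₀ ℕ}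
    (hd : d ∈ f.support) (hlt : ∀ c ∈ f.support, c ≠ d → c ≺[m] d) : m.degree f = d := by
  refine m.toSyn.injective (le_antisymm (m.degree_le_iff.2 fun c hc => ?_) (m.le_degree hd))
  rcases eq_or_ne c d with rfl | hne
  · exact le_rfl
  · exact (hlt c hc hne).le

theorem degree_ofLt_eq_of_forall_lt [Finite σ] {lt : (σ →₀ ℕ) → (σ →₀ ℕ) → Prop}
    (h : IsStrictMonomialOrder lt) {f : MvPolynomial σ R} {d : σ →₀ ℕ} (hd : d ∈ f.support)
    (hlt : ∀ c ∈ f.support, c ≠ d → lt c d) : (ofLt h).degree f = d :=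
  (ofLt h).degree_eq_of_forall_lt hd hlt

end CommSemiring

section CommRing

variable {R : Type*} [CommRing R] [NoZeroDivisors R] (m : MonomialOrder σ)

theorem exists_degree_le_of_eq_linearCombination {ι : Type*} {b : ι → MvPolynomial σ R}
    {g : MvPolynomial σ R} (hg0 : g ≠ 0) {q : ι →₀ MvPolynomial σ R}
    (hgq : g = Finsupp.linearCombination _ b q) (hdeg : ∀ i, m.degree (b i * q i) ≼[m] m.degree g) :
    ∃ i, m.degree (b i) ≤ m.degree g := by
  have hcoeff : (q.sum fun i a => a • b i).coeff (m.degree g) ≠ 0 := by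
    rw [← Finsupp.linearCombination_apply, ← hgq]
    exact mem_support_iff.1 (m.degree_mem_support hg0)
  rw [Finsupp.sum, coeff_sum] at hcoeff
  obtain ⟨i, -, hi⟩ := Finset.exists_ne_zero_of_sum_ne_zero hcoeff
  rw [smul_eq_mul, mul_comm] at hi
  have hbq : b i * q i ≠ 0 := fun h0 => hi (by rw [h0, coeff_zero])
  have hdeg_eq : m.degree (b i * q i) = m.degree g :=
    m.toSyn.injective (le_antisymm (hdeg i) (m.le_degree (mem_support_iff.2 hi)))
  refine ⟨i, ?_⟩
  rw [← hdeg_eq, m.degree_mul (left_ne_zero_of_mul hbq) (right_ne_zero_of_mul hbq)]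
  exact le_self_add

theorem exists_degree_le_degree_of_mem_ideal {G : Set (MvPolynomial σ R)}
    (hG : ∀ b ∈ G, IsUnit (m.leadingCoeff b)) {V : Submodule R (MvPolynomial σ R)}
    (hV : Disjoint V ((Ideal.span G).restrictScalars R))
    (hrem : ∀ r : MvPolynomial σ R, (∀ c ∈ r.support, ∀ b ∈ G, ¬ m.degree b ≤ c) → r ∈ V)
    {g : MvPolynomial σ R} (hg : g ∈ Ideal.span G) (hg0 : g ≠ 0) :
    ∃ b ∈ G, m.degree b ≤ m.degree g := by
  obtain ⟨q, r, hgr, hdeg, hr⟩ := m.div_set hG g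
  set s := Finsupp.linearCombination _ (fun b : G => (b : MvPolynomial σ R)) q
  have hs : s ∈ Ideal.span G := by
    have hrange := LinearMap.mem_range_self
      (Finsupp.linearCombination _ (fun b : G => (b : MvPolynomial σ R))) q
    rwa [Finsupp.range_linearCombination, Subtype.range_coe] at hrange
  have hr0 : r = 0 := by
    refine Submodule.disjoint_def.1 hV r (hrem r hr) ?_
    rw [eq_sub_of_add_eq' hgr.symm]
    exact Ideal.sub_mem _ hg hs
  obtain ⟨b, hb⟩ := m.exists_degree_le_of_eq_linearCombination hg0 (by rw [hgr, hr0, add_zero]) hdeg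
  exact ⟨b, b.2, hb⟩

end CommRing

end MonomialOrder

theorem MvPolynomial.coeff_eq_one_of_sub_monomial_mem_span {R σ : Type*} [CommRing R]
    {s : Set (σ →₀ ℕ)} {p : MvPolynomial σ R} {d : σ →₀ ℕ} (hd : d ∉ s)
    (hp : p - monomial d (1 : R) ∈ Submodule.span R ((monomial · 1) '' s)) : coeff d p = 1 := by
  classical
  rw [← restrictSupport_eq_span, mem_restrictSupport_iff] at hp
  have hsub : coeff d (p - monomial d 1) = 0 := notMem_support_iff.1 fun h => hd (hp h)
  rwa [coeff_sub, coeff_monomial, if_pos rfl, sub_eq_zero] at hsub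

theorem mem_or_exists_mem_border_le {n : ℕ} {B : Finset (Fin n →₀ ℕ)} (h0 : 0 ∈ B)
    (α : Fin n →₀ ℕ) : α ∈ B ∨ ∃ m ∈ border B, m ≤ α := by
  induction α using WellFoundedLT.induction with
  | _ α ih =>
  by_cases hα : α ∈ B
  · exact Or.inl hα
  have hα0 : α ≠ 0 := by
    rintro rfl
    exact hα h0
  obtain ⟨i, hi⟩ := Finsupp.support_nonempty_iff.2 hα0
  set β := α - Finsupp.single i 1
  have hβα : β + Finsupp.single i 1 = α := tsub_add_cancel_of_le <|
    Finsupp.single_le_iff.2 (Nat.one_le_iff_ne_zero.2 (Finsupp.mem_support_iff.1 hi))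
  have hβ_lt : β < α :=
    hβα ▸ lt_add_of_pos_right _ (pos_iff_ne_zero.2 (Finsupp.single_ne_zero.2 one_ne_zero))
  rcases ih β hβ_lt with hβ | ⟨m, hm, hmβ⟩
  · exact Or.inr ⟨α, ⟨hα, β, hβ, i, hβα.symm⟩, le_rfl⟩
  · exact Or.inr ⟨m, hm, hmβ.trans hβ_lt.le⟩

/-- A border basis whose elements have their border monomial as `≺`-leading
monomial for a monomial order `≺` is a Gröbner basis: the leading exponent of
any nonzero element of the ideal is divisible by some border exponent. -/
theorem border_basis_is_groebner_basis {K : Type*} [Field K] {n : ℕ}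
    (lt : (Fin n →₀ ℕ) → (Fin n →₀ ℕ) → Prop)
    (hirr : ∀ a, ¬ lt a a)
    (htrans : ∀ a b c, lt a b → lt b c → lt a c)
    (htotal : ∀ a b, a ≠ b → lt a b ∨ lt b a)
    (hadd : ∀ a b c, lt a b → lt (a + c) (b + c))
    (hzero : ∀ a : Fin n →₀ ℕ, a ≠ 0 → lt 0 a)
    (B : Finset (Fin n →₀ ℕ)) (hconn : connectedToOne (B : Set (Fin n →₀ ℕ)))
    (f : (Fin n →₀ ℕ) → MvPolynomial (Fin n) K)
    (hf : ∀ m ∈ border B, f m - monomial m (1 : K) ∈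
      Submodule.span K ((fun β => monomial β (1 : K)) '' (B : Set (Fin n →₀ ℕ))))
    (hbb : IsCompl
      (Submodule.span K ((fun β => monomial β (1 : K)) '' (B : Set (Fin n →₀ ℕ))))
      (Submodule.restrictScalars K (Ideal.span (f '' border B))))
    (hlead : ∀ m ∈ border B, ∀ m' ∈ (f m).support, m' ≠ m → lt m' m) :
    ∀ g ∈ Ideal.span (f '' border B), g ≠ 0 →
      ∀ L : Fin n →₀ ℕ, (L ∈ g.support ∧ ∀ m' ∈ g.support, m' ≠ L → lt m' L) →
        ∃ m ∈ border B, m ≤ L := by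
  intro g hg hg0 L ⟨hL, hLmax⟩
  have hord : IsStrictMonomialOrder lt := ⟨hirr, htrans, htotal, hadd, hzero⟩
  let ord := MonomialOrder.ofLt hord
  have hcoeff_f : ∀ m ∈ border B, coeff m (f m) = 1 := fun m hm =>
    coeff_eq_one_of_sub_monomial_mem_span hm.1 (hf m hm)
  have hdeg_f : ∀ m ∈ border B, ord.degree (f m) = m := fun m hm =>
    MonomialOrder.degree_ofLt_eq_of_forall_lt hord (by simp [hcoeff_f m hm]) (hlead m hm)
  have hunit : ∀ b ∈ f '' border B, IsUnit (ord.leadingCoeff b) := by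
    rintro _ ⟨m, hm, rfl⟩
    rw [MonomialOrder.leadingCoeff, hdeg_f m hm, hcoeff_f m hm]
    exact isUnit_one
  have hrem : ∀ r : MvPolynomial (Fin n) K,
      (∀ c ∈ r.support, ∀ b ∈ f '' border B, ¬ ord.degree b ≤ c) →
      r ∈ Submodule.span K ((fun β => monomial β (1 : K)) '' (B : Set (Fin n →₀ ℕ))) := by
    intro r hr
    rw [← restrictSupport_eq_span, mem_restrictSupport_iff]
    intro c hc
    obtain hcB | ⟨m, hm, hmc⟩ := mem_or_exists_mem_border_le hconn.1 c
    exacts [hcB, (hr c hc _ ⟨m, hm, rfl⟩ (by rwa [hdeg_f m hm])).elim]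
  obtain ⟨_, ⟨m, hm, rfl⟩, hle⟩ :=
    ord.exists_degree_le_degree_of_mem_ideal hunit hbb.disjoint hrem hg hg0
  refine ⟨m, hm, ?_⟩
  rwa [hdeg_f m hm, MonomialOrder.degree_ofLt_eq_of_forall_lt hord hL hLmax] at hle
end
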